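/- Let E be a rational expression over (Σ, X) and let x be a variable in X. Let Γ = {b ∈ Σ_0 | an operator ·_b or ^{*_b} occurs in E}, and let a be a fresh symbol of rank 0 not in Σ. Then E ∼_{Σ∖Γ} (E_{x←a}) ·_a x, i.e. for every tuple 𝓛 of tree languages over Σ∖Γ (one language per variable of X), the 𝓛-language of E equals the 𝓛-language of (E_{x←a}) ·_a x, both interpreted as rational expressions over (Σ∪{a}, X). -/

import Mathlib

attribute [local instance] Classical.propDecidable

inductive GTree (α : Type) (ar : α → ℕ) : Type
  | node (f : α) (children : Fin (ar f) → GTree α ar) : GTree α ar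

namespace GTree

variable {α : Type} {ar : α → ℕ}

def cprod (c : α) : GTree α ar → Set (GTree α ar) → Set (GTree α ar)
  | node f ch, L =>
    if f = c then L
    else { s | ∃ ch' : Fin (ar f) → GTree α ar,
            s = node f ch' ∧ ∀ i, ch' i ∈ cprod c (ch i) L }

def lprod (c : α) (L L' : Set (GTree α ar)) : Set (GTree α ar) :=
  ⋃ t ∈ L, cprod c t L'

def leaf (c : α) (hc : ar c = 0) : GTree α ar :=
  node c (fun i => (i.cast hc).elim0)

def iterProd (c : α) (hc : ar c = 0) (L : Set (GTree α ar)) : ℕ → Set (GTree α ar)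
  | 0 => {leaf c hc}
  | n + 1 => iterProd c hc L n ∪ lprod c L (iterProd c hc L n)

def closure (c : α) (hc : ar c = 0) (L : Set (GTree α ar)) : Set (GTree α ar) :=
  ⋃ n, iterProd c hc L n

def occurs (a : α) : GTree α ar → Prop
  | node f ch => f = a ∨ ∃ i, occurs a (ch i)

end GTree

/-- Rational tree expressions over alphabet `(α, ar)` and variables `V`.
In the products and closures, the subscript symbol is required to have rank 0. -/
inductive RExp (α : Type) (ar : α → ℕ) (V : Type) : Type
  | zero : RExp α ar V
  | var (v : V) : RExp α ar V
  | node (f : α) (es : Fin (ar f) → RExp α ar V) : RExp α ar V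
  | plus (e₁ e₂ : RExp α ar V) : RExp α ar V
  | prod (c : α) (hc : ar c = 0) (e₁ e₂ : RExp α ar V) : RExp α ar V
  | star (c : α) (hc : ar c = 0) (e : RExp α ar V) : RExp α ar V

namespace RExp

variable {α : Type} {ar : α → ℕ} {V : Type}

/-- The `𝓛`-language denoted by a rational expression, where `ρ` assigns a
tree language to each variable. -/
def lang (ρ : V → Set (GTree α ar)) : RExp α ar V → Set (GTree α ar)
  | zero => ∅
  | var v => ρ v
  | node f es => { t | ∃ ch : Fin (ar f) → GTree α ar,
      t = GTree.node f ch ∧ ∀ i, ch i ∈ lang ρ (es i) }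
  | plus e₁ e₂ => lang ρ e₁ ∪ lang ρ e₂
  | prod c _ e₁ e₂ => GTree.lprod c (lang ρ e₁) (lang ρ e₂)
  | star c hc e => GTree.closure c hc (lang ρ e)

/-- Substitution of the expression `F` for the variable `x`. -/
noncomputable def subst (x : V) (F : RExp α ar V) : RExp α ar V → RExp α ar V
  | zero => zero
  | var v => if v = x then F else var v
  | node f es => node f (fun i => subst x F (es i))
  | plus e₁ e₂ => plus (subst x F e₁) (subst x F e₂)
  | prod c hc e₁ e₂ => prod c hc (subst x F e₁) (subst x F e₂)
  | star c hc e => star c hc (subst x F e)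

/-- The variable `v` occurs in the expression. -/
def varOcc (v : V) : RExp α ar V → Prop
  | zero => False
  | var w => w = v
  | node _ es => ∃ i, varOcc v (es i)
  | plus e₁ e₂ => varOcc v e₁ ∨ varOcc v e₂
  | prod _ _ e₁ e₂ => varOcc v e₁ ∨ varOcc v e₂
  | star _ _ e => varOcc v e

/-- The symbol `b` is the subscript of a product `·_b` or a closure `^{*_b}`
occurring in the expression. -/
def opSym (b : α) : RExp α ar V → Prop
  | zero => False
  | var _ => False
  | node _ es => ∃ i, opSym b (es i)
  | plus e₁ e₂ => opSym b e₁ ∨ opSym b e₂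
  | prod c _ e₁ e₂ => c = b ∨ opSym b e₁ ∨ opSym b e₂
  | star c _ e => c = b ∨ opSym b e

/-- The symbol `s` occurs somewhere in the expression (as a node symbol or as
the subscript of an operator). -/
def symIn (s : α) : RExp α ar V → Prop
  | zero => False
  | var _ => False
  | node f es => f = s ∨ ∃ i, symIn s (es i)
  | plus e₁ e₂ => symIn s e₁ ∨ symIn s e₂
  | prod c _ e₁ e₂ => c = s ∨ symIn s e₁ ∨ symIn s e₂
  | star c _ e => c = s ∨ symIn s e

end RExp

/-- The output function of a tree automaton with transition set `Δ`:
`δ(f(t₁,…,tₙ)) = {q | ∃(f,q₁,…,qₙ,q) ∈ Δ, ∀ i, qᵢ ∈ δ(tᵢ)}`. -/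
def GTree.out {α : Type} {ar : α → ℕ} {Q : Type}
    (Δ : Set (Sigma fun f : α => (Fin (ar f) → Q) × Q)) : GTree α ar → Set Q
  | .node f ch => { q | ∃ qs : Fin (ar f) → Q,
      (⟨f, qs, q⟩ : Sigma fun f : α => (Fin (ar f) → Q) × Q) ∈ Δ ∧
      ∀ i, qs i ∈ GTree.out Δ (ch i) }

/-!
Right product with the language `L` of `x`, `S ↦ S ·_a L`, commutes with every operator that
occurs in `E`. It distributes over `+` and over the node constructors, and for `c ≠ a` with `L`
free of `c` it satisfies `(S ·_c B) ·_a L = (S ·_a L) ·_c (B ·_a L)`, hence also passes through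
`^{*_c}`. By induction on `E`, `L(E_{x←a}) ·_a L = L(E)`: the leaf `a` becomes `L`, and the
language of any other variable, containing no `a`, is left unchanged.
-/

namespace GTree

variable {α : Type} {ar : α → ℕ}

def nodeSet (f : α) (S : Fin (ar f) → Set (GTree α ar)) : Set (GTree α ar) :=
  { t | ∃ ch : Fin (ar f) → GTree α ar, t = node f ch ∧ ∀ i, ch i ∈ S i }

theorem node_eq_leaf {f : α} (hf : ar f = 0) (ch : Fin (ar f) → GTree α ar) :
    node f ch = leaf f hf :=
  congrArg (node f) (funext fun i => (i.cast hf).elim0)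

theorem nodeSet_of_ar_eq_zero {f : α} (hf : ar f = 0) (S : Fin (ar f) → Set (GTree α ar)) :
    nodeSet f S = {leaf f hf} := by
  ext t
  constructor
  · rintro ⟨ch, rfl, -⟩
    exact node_eq_leaf hf ch
  · rintro rfl
    exact ⟨_, rfl, fun i => (i.cast hf).elim0⟩

theorem not_occurs_leaf {a c : α} (hca : c ≠ a) (hc : ar c = 0) : ¬ occurs a (leaf c hc) := by
  rintro (h | ⟨i, -⟩)
  · exact hca h
  · exact (i.cast hc).elim0

theorem cprod_node_self (c : α) (ch : Fin (ar c) → GTree α ar) (L : Set (GTree α ar)) :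
    cprod c (node c ch) L = L := by
  simp [cprod]

theorem cprod_leaf_self {c : α} (hc : ar c = 0) (L : Set (GTree α ar)) :
    cprod c (leaf c hc) L = L :=
  cprod_node_self c _ L

theorem cprod_node_of_ne {c f : α} (h : f ≠ c) (ch : Fin (ar f) → GTree α ar)
    (L : Set (GTree α ar)) :
    cprod c (node f ch) L = nodeSet f fun i => cprod c (ch i) L := by
  simp [cprod, h, nodeSet]

theorem cprod_of_not_occurs {c : α} {t : GTree α ar} (h : ¬ occurs c t) (L : Set (GTree α ar)) :
    cprod c t L = {t} := by
  induction t with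
  | node f ch ih =>
    have hch : ∀ i, cprod c (ch i) L = {ch i} := fun i => ih i fun hi => h (Or.inr ⟨i, hi⟩)
    rw [cprod_node_of_ne fun hf => h (Or.inl hf)]
    ext s
    simp [nodeSet, hch, ← funext_iff]

theorem mem_lprod {c : α} {t : GTree α ar} {L L' : Set (GTree α ar)} :
    t ∈ lprod c L L' ↔ ∃ u ∈ L, t ∈ cprod c u L' := by
  simp [lprod]

theorem lprod_singleton (c : α) (t : GTree α ar) (L : Set (GTree α ar)) :
    lprod c {t} L = cprod c t L :=
  Set.biUnion_singleton t _

theorem lprod_union (c : α) (A B L : Set (GTree α ar)) :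
    lprod c (A ∪ B) L = lprod c A L ∪ lprod c B L :=
  Set.biUnion_union A B _

theorem lprod_iUnion {ι : Sort*} (c : α) (A : ι → Set (GTree α ar)) (L : Set (GTree α ar)) :
    lprod c (⋃ i, A i) L = ⋃ i, lprod c (A i) L :=
  Set.biUnion_iUnion A _

theorem lprod_biUnion {ι : Type*} (c : α) (s : Set ι) (A : ι → Set (GTree α ar))
    (L : Set (GTree α ar)) :
    lprod c (⋃ i ∈ s, A i) L = ⋃ i ∈ s, lprod c (A i) L := by
  simp only [lprod_iUnion]

theorem lprod_of_not_occurs {c : α} {L : Set (GTree α ar)} (hL : ∀ u ∈ L, ¬ occurs c u)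
    (L' : Set (GTree α ar)) : lprod c L L' = L :=
  (Set.iUnion₂_congr fun t ht => cprod_of_not_occurs (hL t ht) L').trans
    (Set.biUnion_of_singleton L)

theorem lprod_nodeSet {a f : α} (h : f ≠ a) (S : Fin (ar f) → Set (GTree α ar))
    (L : Set (GTree α ar)) :
    lprod a (nodeSet f S) L = nodeSet f fun i => lprod a (S i) L := by
  ext t
  constructor
  · intro ht
    obtain ⟨_, ⟨ch, rfl, hch⟩, htc⟩ := mem_lprod.1 ht
    rw [cprod_node_of_ne h] at htc
    obtain ⟨ch', rfl, hch'⟩ := htc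
    exact ⟨ch', rfl, fun i => mem_lprod.2 ⟨ch i, hch i, hch' i⟩⟩
  · rintro ⟨ch', rfl, hch'⟩
    choose u hu hcu using fun i => mem_lprod.1 (hch' i)
    refine mem_lprod.2 ⟨node f u, ⟨u, rfl, hu⟩, ?_⟩
    rw [cprod_node_of_ne h]
    exact ⟨ch', rfl, hcu⟩

section Distrib

variable {a c : α} (ha : ar a = 0) (hc : ar c = 0) (hca : c ≠ a)
  {L : Set (GTree α ar)} (hL : ∀ u ∈ L, ¬ occurs c u)
include ha hc hca hL

theorem lprod_cprod_distrib (t : GTree α ar) (B : Set (GTree α ar)) :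
    lprod a (cprod c t B) L = lprod c (cprod a t L) (lprod a B L) := by
  induction t with
  | node f ch ih =>
    by_cases hfc : f = c
    · subst hfc
      rw [cprod_node_self, cprod_node_of_ne hca, nodeSet_of_ar_eq_zero hc, lprod_singleton,
        cprod_leaf_self]
    by_cases hfa : f = a
    · subst hfa
      rw [cprod_node_of_ne hfc, nodeSet_of_ar_eq_zero ha, lprod_singleton, cprod_leaf_self,
        cprod_node_self, lprod_of_not_occurs hL]
    rw [cprod_node_of_ne hfc, cprod_node_of_ne hfa, lprod_nodeSet hfa, lprod_nodeSet hfc]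
    exact congrArg (nodeSet f) (funext ih)

theorem lprod_lprod_distrib (A B : Set (GTree α ar)) :
    lprod a (lprod c A B) L = lprod c (lprod a A L) (lprod a B L) :=
  calc lprod a (lprod c A B) L = ⋃ s ∈ A, lprod a (cprod c s B) L :=
        lprod_biUnion a A (fun s => cprod c s B) L
    _ = ⋃ s ∈ A, lprod c (cprod a s L) (lprod a B L) := by
        simp only [lprod_cprod_distrib ha hc hca hL]
    _ = lprod c (lprod a A L) (lprod a B L) :=
        (lprod_biUnion c A (fun s => cprod a s L) (lprod a B L)).symm

theorem lprod_iterProd_distrib (A : Set (GTree α ar)) (n : ℕ) :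
    lprod a (iterProd c hc A n) L = iterProd c hc (lprod a A L) n := by
  induction n with
  | zero => exact (lprod_singleton a _ L).trans (cprod_of_not_occurs (not_occurs_leaf hca hc) L)
  | succ n ih =>
    rw [iterProd, iterProd, lprod_union, lprod_lprod_distrib ha hc hca hL, ih]

theorem lprod_closure_distrib (A : Set (GTree α ar)) :
    lprod a (closure c hc A) L = closure c hc (lprod a A L) :=
  (lprod_iUnion a _ L).trans (Set.iUnion_congr (lprod_iterProd_distrib ha hc hca hL A))

end Distrib

end GTree

namespace RExp

variable {α : Type} {ar : α → ℕ} {V : Type}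

def leaf (a : α) (ha : ar a = 0) : RExp α ar V :=
  node a fun i => (i.cast ha).elim0

theorem lang_node (ρ : V → Set (GTree α ar)) (f : α) (es : Fin (ar f) → RExp α ar V) :
    lang ρ (node f es) = GTree.nodeSet f fun i => lang ρ (es i) :=
  rfl

theorem lang_leaf (ρ : V → Set (GTree α ar)) {a : α} (ha : ar a = 0) :
    lang ρ (leaf a ha) = {GTree.leaf a ha} :=
  GTree.nodeSet_of_ar_eq_zero ha _

theorem lprod_lang_subst_leaf {a : α} (ha : ar a = 0) (x : V) {ρ : V → Set (GTree α ar)}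
    (hρa : ∀ v, ∀ t ∈ ρ v, ¬ GTree.occurs a t) (E : RExp α ar V) (hfresh : ¬ symIn a E)
    (hρx : ∀ b, opSym b E → ∀ t ∈ ρ x, ¬ GTree.occurs b t) :
    GTree.lprod a (lang ρ (subst x (leaf a ha) E)) (ρ x) = lang ρ E := by
  induction E with
  | zero => exact Set.biUnion_empty _
  | var v =>
    by_cases hv : v = x
    · subst hv
      rw [subst, if_pos rfl, lang_leaf, GTree.lprod_singleton, GTree.cprod_leaf_self, lang]
    · rw [subst, if_neg hv, lang]
      exact GTree.lprod_of_not_occurs (hρa v) _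
  | node f es ih =>
    rw [subst, lang_node, GTree.lprod_nodeSet fun h => hfresh (Or.inl h), lang_node]
    exact congrArg (GTree.nodeSet f) (funext fun i =>
      ih i (fun h => hfresh (Or.inr ⟨i, h⟩)) fun b hb => hρx b ⟨i, hb⟩)
  | plus e₁ e₂ ih₁ ih₂ =>
    rw [subst, lang, lang, GTree.lprod_union,
      ih₁ (fun h => hfresh (Or.inl h)) fun b hb => hρx b (Or.inl hb),
      ih₂ (fun h => hfresh (Or.inr h)) fun b hb => hρx b (Or.inr hb)]
  | prod c hc e₁ e₂ ih₁ ih₂ =>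
    rw [subst, lang, lang,
      GTree.lprod_lprod_distrib ha hc (fun h => hfresh (Or.inl h)) (hρx c (Or.inl rfl)),
      ih₁ (fun h => hfresh (Or.inr (Or.inl h))) fun b hb => hρx b (Or.inr (Or.inl hb)),
      ih₂ (fun h => hfresh (Or.inr (Or.inr h))) fun b hb => hρx b (Or.inr (Or.inr hb))]
  | star c hc e ih =>
    rw [subst, lang, lang,
      GTree.lprod_closure_distrib ha hc (fun h => hfresh (Or.inl h)) (hρx c (Or.inl rfl)),
      ih (fun h => hfresh (Or.inr h)) fun b hb => hρx b (Or.inr hb)]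

end RExp

/-- let `Γ` be the set of symbols `b` such that an operator `·_b`
or `^{*_b}` occurs in `E`, and let `a` be a fresh rank-0 symbol not occurring in
`E` (it is not in `Σ`). Then `E ∼_{Σ∖Γ} (E_{x←a}) ·_a x`: for every assignment
`ρ` of tree languages over `Σ∖Γ` (in particular avoiding `a` and every `b ∈ Γ`)
to the variables, the two expressions denote the same language. -/
theorem factor_out_variable {α : Type} {ar : α → ℕ} {V : Type}
    (E : RExp α ar V) (x : V) (a : α) (ha : ar a = 0)
    (hfresh : ¬ RExp.symIn a E)
    (ρ : V → Set (GTree α ar))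
    (hρ : ∀ v, ∀ t ∈ ρ v,
      ¬ GTree.occurs a t ∧ ∀ b : α, RExp.opSym b E → ¬ GTree.occurs b t) :
    RExp.lang ρ
        (RExp.prod a ha
          (RExp.subst x (RExp.node a fun i => (i.cast ha).elim0) E)
          (RExp.var x)) =
      RExp.lang ρ E :=
  RExp.lprod_lang_subst_leaf ha x (fun v t ht => (hρ v t ht).1) E hfresh
    fun b hb t ht => (hρ x t ht).2 b hb
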